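/- arXiv:2010.08148 — 2 statements merged into one kernel-verified Lean document; each statement's English description precedes it below -/
import Mathlib

section
/- Let ν be a probability measure on ℝ^d with compact support. Then the archetypal analysis problem, minimizing F_ν(A) = (∫ d²(x, co(A)) dν)^{1/2} over pointsets A of k points contained in co(supp(ν)), admits at least one minimizer, and the optimal value satisfies F_ν^⋆ ≤ (∫ ‖x − x̄‖₂² dν(x))^{1/2}, where x̄ = ∫ x dν(x) is the mean of ν. -/
open MeasureTheory
open Metric Set

lemma msupport_compl_null {α : Type*} [TopologicalSpace α] [SecondCountableTopology α]
    [MeasurableSpace α] (ν : Measure α) :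
    ν ({x | ∀ U ∈ nhds x, 0 < ν U})ᶜ = 0 := by
  classical
  have hU : ∀ x : (({x : α | ∀ U ∈ nhds x, 0 < ν U})ᶜ : Set α), ∃ U : Set α, IsOpen U ∧ (x : α) ∈ U ∧ ν U = 0 := by
    rintro ⟨x, hx⟩
    simp only [mem_compl_iff, mem_setOf_eq, not_forall] at hx
    obtain ⟨U, hUx, hpos⟩ := hx
    obtain ⟨V, hVU, hV, hxV⟩ := mem_nhds_iff.mp hUx
    refine ⟨V, hV, hxV, measure_mono_null hVU ?_⟩
    simpa using hpos
  choose U hUo hUx hU0 using hU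
  obtain ⟨T, hTc, hTeq⟩ := TopologicalSpace.isOpen_iUnion_countable U hUo
  refine measure_mono_null (fun x hx => ?_) ((measure_biUnion_null_iff hTc).2 fun i _ => hU0 i)
  rw [hTeq]
  exact Set.mem_iUnion.2 ⟨⟨x, hx⟩, hUx _⟩

lemma sum_pad {M : Type*} [AddCommMonoid M] {n m : ℕ} (hmn : m ≤ n) (G : Fin m → M) :
    ∑ j : Fin n, (if h : (j : ℕ) < m then G ⟨j, h⟩ else 0) = ∑ i : Fin m, G i := by
  rw [Fin.sum_univ_eq_sum_range (fun j => if h : j < m then G ⟨j, h⟩ else 0) n,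
    ← Finset.sum_subset (Finset.range_subset_range.2 hmn)
      (fun j _ hj => dif_neg (by simpa using hj)),
    ← Fin.sum_univ_eq_sum_range (fun j => if h : j < m then G ⟨j, h⟩ else 0) m]
  exact Finset.sum_congr rfl fun i _ => by simp [i.isLt]

lemma isCompact_convexHull_of_isCompact {d : ℕ} {s : Set (EuclideanSpace ℝ (Fin d))}
    (hs : IsCompact s) : IsCompact (convexHull ℝ s) := by
  classical
  rcases s.eq_empty_or_nonempty with rfl | ⟨x₀, hx₀⟩
  · simpa [convexHull_empty] using isCompact_empty
  set n := d + 1 with hn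
  have himg : convexHull ℝ s =
      (fun p : (Fin n → ℝ) × (Fin n → EuclideanSpace ℝ (Fin d)) => ∑ i, p.1 i • p.2 i) ''
        ((stdSimplex ℝ (Fin n)) ×ˢ (Set.univ.pi fun _ => s)) := by
    apply Subset.antisymm
    · intro x hx
      rw [convexHull_eq_union] at hx
      simp only [Set.mem_iUnion] at hx
      obtain ⟨t, hts, hai, hxt⟩ := hx
      have hcard : t.card ≤ n := by
        have h1 := hai.card_le_finrank_succ
        rw [Fintype.card_coe] at h1
        refine h1.trans (Nat.add_le_add_right ?_ 1)
        have h2 := Submodule.finrank_le (vectorSpan ℝ (Set.range (Subtype.val : t → EuclideanSpace ℝ (Fin d))))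
        rwa [finrank_euclideanSpace_fin] at h2
      rw [Finset.convexHull_eq] at hxt
      obtain ⟨w, hw0, hw1, hcm⟩ := hxt
      set m := t.card with hm
      set e := t.equivFin with he
      set z : Fin n → EuclideanSpace ℝ (Fin d) :=
        fun j => if h : (j : ℕ) < m then (e.symm ⟨j, h⟩ : _) else x₀ with hz
      set wt : Fin n → ℝ := fun j => if h : (j : ℕ) < m then w (e.symm ⟨j, h⟩) else 0 with hwt
      have hx' : x = ∑ y ∈ t, w y • y := by
        rw [← hcm, Finset.centerMass_eq_of_sum_1 _ _ hw1]
        simp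
      refine ⟨(wt, z), ⟨⟨fun j => ?_, ?_⟩, fun i _ => ?_⟩, ?_⟩
      · simp only [hwt]
        split_ifs with h
        · exact hw0 _ (e.symm ⟨j, h⟩).2
        · exact le_refl 0
      · have h1 : ∑ j : Fin n, wt j = ∑ i : Fin m, w ((e.symm i : t) : EuclideanSpace ℝ (Fin d)) :=
          sum_pad hcard (fun i => w ((e.symm i : t) : EuclideanSpace ℝ (Fin d)))
        have h2 := Equiv.sum_comp e.symm (fun y : t => w (y : EuclideanSpace ℝ (Fin d)))
        have h3 := Finset.sum_coe_sort t w
        show ∑ j : Fin n, wt j = 1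
        rw [h1, h2, h3]
        exact hw1
      · simp only [hz]
        split_ifs with h
        · exact hts (e.symm ⟨i, h⟩).2
        · exact hx₀
      · have hterm : ∀ j : Fin n, wt j • z j =
            if h : (j : ℕ) < m then
              w ((e.symm ⟨j, h⟩ : t) : EuclideanSpace ℝ (Fin d)) •
                ((e.symm ⟨j, h⟩ : t) : EuclideanSpace ℝ (Fin d)) else 0 := by
          intro j
          by_cases h : (j : ℕ) < m
          · simp [hwt, hz, h]
          · simp [hwt, hz, h]
        rw [hx']
        calc (fun p : (Fin n → ℝ) × (Fin n → EuclideanSpace ℝ (Fin d)) => ∑ i, p.1 i • p.2 i)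
              (wt, z) = ∑ j : Fin n, wt j • z j := rfl
          _ = ∑ i : Fin m, w ((e.symm i : t) : EuclideanSpace ℝ (Fin d)) •
                ((e.symm i : t) : EuclideanSpace ℝ (Fin d)) := by
              rw [Finset.sum_congr rfl fun j _ => hterm j]
              exact sum_pad hcard (fun i => w ((e.symm i : t) : EuclideanSpace ℝ (Fin d)) •
                ((e.symm i : t) : EuclideanSpace ℝ (Fin d)))
          _ = ∑ y ∈ t, w y • y := by
              rw [Equiv.sum_comp e.symm
                (fun y : t => w (y : EuclideanSpace ℝ (Fin d)) • (y : EuclideanSpace ℝ (Fin d)))]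
              exact Finset.sum_coe_sort t (fun y => w y • y)
    · rintro x ⟨⟨w, z⟩, ⟨hw, hz⟩, rfl⟩
      have hw1 : ∑ i, w i = 1 := hw.2
      have := Finset.centerMass_mem_convexHull (Finset.univ : Finset (Fin n))
        (fun i _ => hw.1 i) (by rw [hw1]; norm_num) (fun i _ => hz i (Set.mem_univ i))
      rwa [Finset.centerMass_eq_of_sum_1 _ _ hw1] at this
  rw [himg]
  exact ((isCompact_stdSimplex (𝕜 := ℝ) (ι := Fin n)).prod (isCompact_univ_pi fun _ => hs)).image
    (continuous_finset_sum _ fun i _ =>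
      ((continuous_apply i).comp continuous_fst).smul ((continuous_apply i).comp continuous_snd))

lemma hull_approx {d k : ℕ} [NeZero k] (A B : Fin k → EuclideanSpace ℝ (Fin d)) :
    ∀ y ∈ convexHull ℝ (Set.range B), ∃ y' ∈ convexHull ℝ (Set.range A), dist y y' ≤ dist A B := by
  intro y hy
  rw [convexHull_eq] at hy
  obtain ⟨ι, t, w, z, hw0, hw1, hz, rfl⟩ := hy
  have hsel : ∀ i, ∃ ℓ : Fin k, i ∈ t → B ℓ = z i := by
    intro i
    by_cases hi : i ∈ t
    · obtain ⟨ℓ, hℓ⟩ := hz i hi; exact ⟨ℓ, fun _ => hℓ⟩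
    · exact ⟨0, fun h => absurd h hi⟩
  choose ℓ hℓ using hsel
  refine ⟨t.centerMass w (fun i => A (ℓ i)),
    Finset.centerMass_mem_convexHull t hw0 (by rw [hw1]; norm_num)
      (fun i _ => Set.mem_range_self _), ?_⟩
  rw [Finset.centerMass_eq_of_sum_1 _ _ hw1, Finset.centerMass_eq_of_sum_1 _ _ hw1,
    dist_eq_norm, ← Finset.sum_sub_distrib]
  calc ‖∑ i ∈ t, (w i • z i - w i • A (ℓ i))‖ ≤ ∑ i ∈ t, ‖w i • z i - w i • A (ℓ i)‖ :=
        norm_sum_le _ _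
    _ ≤ ∑ i ∈ t, w i * dist A B := by
        refine Finset.sum_le_sum fun i hi => ?_
        rw [← smul_sub, norm_smul, Real.norm_eq_abs, abs_of_nonneg (hw0 i hi)]
        refine mul_le_mul_of_nonneg_left ?_ (hw0 i hi)
        rw [← hℓ i hi, ← dist_eq_norm, dist_comm]
        exact dist_le_pi_dist A B (ℓ i)
    _ = dist A B := by rw [← Finset.sum_mul, hw1, one_mul]

lemma infDist_hull_le {d k : ℕ} [NeZero k] (x : EuclideanSpace ℝ (Fin d))
    (A B : Fin k → EuclideanSpace ℝ (Fin d)) :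
    Metric.infDist x (convexHull ℝ (Set.range A)) ≤
      Metric.infDist x (convexHull ℝ (Set.range B)) + dist A B := by
  have hne : ∀ C : Fin k → EuclideanSpace ℝ (Fin d), (convexHull ℝ (Set.range C)).Nonempty :=
    fun C => ⟨C 0, subset_convexHull ℝ _ (Set.mem_range_self _)⟩
  have hbdd : ∀ C : Fin k → EuclideanSpace ℝ (Fin d),
      Bornology.IsBounded (convexHull ℝ (Set.range C)) :=
    fun C => ((Set.finite_range C).isCompact_convexHull ℝ).isBounded
  have hfin : EMetric.hausdorffEdist (convexHull ℝ (Set.range B)) (convexHull ℝ (Set.range A)) ≠ ⊤ :=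
    Metric.hausdorffEdist_ne_top_of_nonempty_of_bounded (hne B) (hne A) (hbdd B) (hbdd A)
  refine (Metric.infDist_le_infDist_add_hausdorffDist (x := x) hfin).trans ?_
  gcongr
  refine Metric.hausdorffDist_le_of_mem_dist dist_nonneg ?_ ?_
  · intro y hy
    obtain ⟨y', hy', h⟩ := hull_approx A B y hy
    exact ⟨y', hy', h⟩
  · intro y hy
    obtain ⟨y', hy', h⟩ := hull_approx B A y hy
    exact ⟨y', hy', by rwa [dist_comm B A] at h⟩


/-- The support of a measure: points all of whose neighborhoods have positive measure. -/
def msupport {E : Type*} [TopologicalSpace E] [MeasurableSpace E] (ν : Measure E) : Set E :=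
  {x | ∀ U ∈ nhds x, 0 < ν U}

/-- The archetypal objective `F_ν`. -/
noncomputable def archObj {d k : ℕ} (ν : Measure (EuclideanSpace ℝ (Fin d)))
    (A : Fin k → EuclideanSpace ℝ (Fin d)) : ℝ :=
  Real.sqrt (∫ x, Metric.infDist x (convexHull ℝ (Set.range A)) ^ 2 ∂ν)

theorem archetype_exists {d k : ℕ} (ν : Measure (EuclideanSpace ℝ (Fin d)))
    [IsProbabilityMeasure ν] (hsupp : IsCompact (msupport ν)) :
    ∃ A : Fin k → EuclideanSpace ℝ (Fin d),
      (∀ ℓ, A ℓ ∈ convexHull ℝ (msupport ν)) ∧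
      (∀ B : Fin k → EuclideanSpace ℝ (Fin d),
        (∀ ℓ, B ℓ ∈ convexHull ℝ (msupport ν)) → archObj ν A ≤ archObj ν B) ∧
      archObj ν A ≤ Real.sqrt (∫ x, ‖x - ∫ y, y ∂ν‖ ^ 2 ∂ν) := by
  classical
  rcases Nat.eq_zero_or_pos k with rfl | hkpos
  · have hz : archObj ν (Fin.elim0 : Fin 0 → EuclideanSpace ℝ (Fin d)) = 0 := by
      simp [archObj, Set.range_eq_empty, convexHull_empty, Metric.infDist_empty]
    refine ⟨Fin.elim0, fun ℓ => ℓ.elim0, fun B _ => ?_, ?_⟩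
    · have hr : ∀ C : Fin 0 → EuclideanSpace ℝ (Fin d), Set.range C = ∅ := fun C =>
        Set.range_eq_empty _
      unfold archObj
      rw [hr, hr]
    · rw [hz]; exact Real.sqrt_nonneg _
  haveI : NeZero k := ⟨hkpos.ne'⟩
  have hnull : ν (msupport ν)ᶜ = 0 := msupport_compl_null ν
  have hae : ∀ᵐ x ∂ν, x ∈ msupport ν := by
    rw [MeasureTheory.ae_iff]; exact hnull
  have hsne : (msupport ν).Nonempty := by
    rcases Set.eq_empty_or_nonempty (msupport ν) with h | h
    · exfalso
      have h1 : ν Set.univ = 0 := by rw [← Set.compl_empty, ← h]; exact hnull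
      simp [measure_univ] at h1
    · exact h
  set C := convexHull ℝ (msupport ν) with hCdef
  have hCcpt : IsCompact C := isCompact_convexHull_of_isCompact hsupp
  have hCne : C.Nonempty := hsne.mono (subset_convexHull ℝ _)
  obtain ⟨R, hR⟩ := hCcpt.isBounded.subset_closedBall 0
  have hnorm : ∀ c ∈ C, ‖c‖ ≤ R := fun c hc => by
    simpa [mem_closedBall_zero_iff] using hR hc
  set K : Set (Fin k → EuclideanSpace ℝ (Fin d)) := Set.univ.pi (fun _ => C) with hKdef
  have hKmem : ∀ {B : Fin k → EuclideanSpace ℝ (Fin d)}, B ∈ K ↔ ∀ ℓ, B ℓ ∈ C := by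
    intro B
    constructor
    · intro h ℓ; exact h ℓ (Set.mem_univ ℓ)
    · intro h ℓ _; exact h ℓ
  set g : (Fin k → EuclideanSpace ℝ (Fin d)) → ℝ :=
    fun A => ∫ x, Metric.infDist x (convexHull ℝ (Set.range A)) ^ 2 ∂ν with hgdef
  have harch : ∀ A, archObj ν A = Real.sqrt (g A) := fun A => rfl
  have hpt : ∀ B ∈ K, ∀ x ∈ msupport ν,
      Metric.infDist x (convexHull ℝ (Set.range B)) ≤ 2 * R := by
    intro B hB x hx
    have h1 : Metric.infDist x (convexHull ℝ (Set.range B)) ≤ dist x (B 0) :=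
      Metric.infDist_le_dist_of_mem (subset_convexHull ℝ _ (Set.mem_range_self 0))
    refine h1.trans ?_
    rw [dist_eq_norm]
    calc ‖x - B 0‖ ≤ ‖x‖ + ‖B 0‖ := norm_sub_le _ _
      _ ≤ R + R := add_le_add (hnorm x (subset_convexHull ℝ _ hx)) (hnorm _ (hKmem.1 hB 0))
      _ = 2 * R := by ring
  have hmeasA : ∀ A : Fin k → EuclideanSpace ℝ (Fin d),
      AEStronglyMeasurable (fun x => Metric.infDist x (convexHull ℝ (Set.range A)) ^ 2) ν :=
    fun A => ((Metric.continuous_infDist_pt _).pow 2).aestronglyMeasurable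
  have hint : ∀ B ∈ K,
      Integrable (fun x => Metric.infDist x (convexHull ℝ (Set.range B)) ^ 2) ν := by
    intro B hB
    refine (integrable_const ((2 * R) ^ 2)).mono' (hmeasA B) ?_
    filter_upwards [hae] with x hx
    rw [Real.norm_eq_abs, abs_of_nonneg (sq_nonneg _)]
    exact pow_le_pow_left₀ Metric.infDist_nonneg (hpt B hB x hx) 2
  have hgle : ∀ A ∈ K, ∀ B ∈ K, g A ≤ g B + 4 * R * dist A B := by
    intro A hA B hB
    have hptwise : ∀ᵐ x ∂ν,
        Metric.infDist x (convexHull ℝ (Set.range A)) ^ 2 ≤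
          Metric.infDist x (convexHull ℝ (Set.range B)) ^ 2 + 4 * R * dist A B := by
      filter_upwards [hae] with x hx
      have hab := infDist_hull_le x A B
      have ha0 : (0:ℝ) ≤ Metric.infDist x (convexHull ℝ (Set.range A)) := Metric.infDist_nonneg
      have hb0 : (0:ℝ) ≤ Metric.infDist x (convexHull ℝ (Set.range B)) := Metric.infDist_nonneg
      have ha := hpt A hA x hx
      have hb := hpt B hB x hx
      nlinarith [dist_nonneg (x := A) (y := B)]
    calc g A ≤ ∫ x, (Metric.infDist x (convexHull ℝ (Set.range B)) ^ 2 + 4 * R * dist A B) ∂ν :=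
          integral_mono_ae (hint A hA) ((hint B hB).add (integrable_const _)) hptwise
      _ = g B + 4 * R * dist A B := by
          rw [integral_add (hint B hB) (integrable_const _), integral_const]
          simp [measure_univ]
          rfl
  have hgcont : ContinuousOn g K := by
    have hlip : LipschitzOnWith (Real.toNNReal (4 * R)) g K := by
      rw [lipschitzOnWith_iff_dist_le_mul]
      intro A hA B hB
      have h0 : (0:ℝ) ≤ 4 * R := by
        obtain ⟨c, hc⟩ := hCne
        have := (norm_nonneg c).trans (hnorm c hc)
        linarith
      rw [Real.coe_toNNReal _ h0, Real.dist_eq, abs_sub_le_iff]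
      constructor
      · linarith [hgle A hA B hB]
      · have h2 := hgle B hB A hA
        rw [dist_comm B A] at h2
        linarith
    exact hlip.continuousOn
  have hKcpt : IsCompact K := isCompact_univ_pi fun _ => hCcpt
  have hKne : K.Nonempty := ⟨fun _ => hCne.choose, fun ℓ _ => hCne.choose_spec⟩
  obtain ⟨A, hAK, hAmin⟩ := hKcpt.exists_isMinOn hKne hgcont
  have hid : Integrable (fun y => y) ν := by
    refine (integrable_const R).mono' aestronglyMeasurable_id ?_
    filter_upwards [hae] with x hx
    exact hnorm x (subset_convexHull ℝ _ hx)
  have hmean : (∫ y, y ∂ν) ∈ C := by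
    refine (convex_convexHull ℝ _).integral_mem hCcpt.isClosed ?_ hid
    filter_upwards [hae] with x hx
    exact subset_convexHull ℝ _ hx
  have hBK : (fun _ : Fin k => (∫ y, y ∂ν)) ∈ K := fun ℓ _ => hmean
  have hgmean : g (fun _ : Fin k => (∫ y, y ∂ν)) = ∫ x, ‖x - ∫ y, y ∂ν‖ ^ 2 ∂ν := by
    rw [hgdef]
    have hrange : Set.range (fun _ : Fin k => (∫ y, y ∂ν)) = {∫ y, y ∂ν} := Set.range_const
    simp only [hrange, convexHull_singleton, Metric.infDist_singleton, dist_eq_norm]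
  refine ⟨A, fun ℓ => hKmem.1 hAK ℓ, fun B hB => ?_, ?_⟩
  · rw [harch A, harch B]
    exact Real.sqrt_le_sqrt (hAmin (hKmem.2 hB))
  · rw [harch A]
    refine Real.sqrt_le_sqrt ?_
    calc g A ≤ g (fun _ : Fin k => (∫ y, y ∂ν)) := hAmin hBK
      _ = _ := hgmean
end

section
/- Let ν be a square-integrable probability measure on ℝ^d and α > 0. The regularized objective F_{ν,α}(A) = (∫ d²(x, co(A)) dν + (α/k)∑_ℓ ‖a_ℓ − ā‖₂²)^{1/2} is (1 + 2√α)-Lipschitz continuous from ({ℝ^d}^k, d_{2,∞}) to ℝ. -/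
open MeasureTheory Metric

section aux

variable {E : Type*} [NormedAddCommGroup E] [NormedSpace ℝ E]

lemma hull_pair_dist' {k : ℕ} (C D : Fin k → E) (M : ℝ)
    (hM : ∀ ℓ, dist (C ℓ) (D ℓ) ≤ M) {z : E × E}
    (hz : z ∈ convexHull ℝ (Set.range fun ℓ => (C ℓ, D ℓ))) : dist z.1 z.2 ≤ M := by
  have hconv : Convex ℝ {p : E × E | dist p.1 p.2 ≤ M} := by
    have : {p : E × E | dist p.1 p.2 ≤ M} =
        (LinearMap.fst ℝ E E - LinearMap.snd ℝ E E) ⁻¹' Metric.closedBall 0 M := by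
      ext p
      simp [mem_closedBall_zero_iff, dist_eq_norm]
    rw [this]
    exact (convex_closedBall (0 : E) M).linear_preimage _
  have hsub : (Set.range fun ℓ => (C ℓ, D ℓ)) ⊆ {p : E × E | dist p.1 p.2 ≤ M} := by
    rintro p ⟨ℓ, rfl⟩
    exact hM ℓ
  exact convexHull_min hsub hconv hz

lemma hull_exists_close' {k : ℕ} (C D : Fin k → E) (M : ℝ)
    (hM : ∀ ℓ, dist (C ℓ) (D ℓ) ≤ M) :
    ∀ y ∈ convexHull ℝ (Set.range C), ∃ y' ∈ convexHull ℝ (Set.range D), dist y y' ≤ M := by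
  intro y hy
  have h1 : Set.range C = (LinearMap.fst ℝ E E) '' Set.range (fun ℓ => (C ℓ, D ℓ)) := by
    ext x; simp [Set.mem_image, Set.mem_range]
  rw [h1, ← (LinearMap.fst ℝ E E).image_convexHull] at hy
  obtain ⟨z, hz, hz1⟩ := hy
  refine ⟨z.2, ?_, ?_⟩
  · have h2 : Set.range D = (LinearMap.snd ℝ E E) '' Set.range (fun ℓ => (C ℓ, D ℓ)) := by
      ext x; simp [Set.mem_image, Set.mem_range]
    rw [h2]
    have h3 : z.2 ∈ (LinearMap.snd ℝ E E) '' convexHull ℝ (Set.range fun ℓ => (C ℓ, D ℓ)) :=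
      ⟨z, hz, rfl⟩
    rw [(LinearMap.snd ℝ E E).image_convexHull] at h3
    exact h3
  · have := hull_pair_dist' C D M hM hz
    rw [← hz1]; exact this

lemma hausdorffDist_hull_le' {k : ℕ} (C D : Fin k → E) (M : ℝ) (hM0 : 0 ≤ M)
    (hM : ∀ ℓ, dist (C ℓ) (D ℓ) ≤ M) :
    hausdorffDist (convexHull ℝ (Set.range C)) (convexHull ℝ (Set.range D)) ≤ M :=
  hausdorffDist_le_of_mem_dist hM0
    (hull_exists_close' C D M hM)
    (hull_exists_close' D C M (fun ℓ => by rw [dist_comm]; exact hM ℓ))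

lemma hausdorffEdist_hull_ne_top' {k : ℕ} (C D : Fin k → E) (M : ℝ)
    (hM : ∀ ℓ, dist (C ℓ) (D ℓ) ≤ M) :
    EMetric.hausdorffEdist (convexHull ℝ (Set.range C)) (convexHull ℝ (Set.range D)) ≠ ⊤ := by
  refine ne_top_of_le_ne_top (by simp : (ENNReal.ofReal M) ≠ ⊤)
    (EMetric.hausdorffEdist_le_of_mem_edist ?_ ?_)
  · intro x hx
    obtain ⟨y, hy, hxy⟩ := hull_exists_close' C D M hM x hx
    exact ⟨y, hy, by rw [edist_dist]; exact ENNReal.ofReal_le_ofReal hxy⟩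
  · intro x hx
    obtain ⟨y, hy, hxy⟩ := hull_exists_close' D C M (fun ℓ => by rw [dist_comm]; exact hM ℓ) x hx
    exact ⟨y, hy, by rw [edist_dist]; exact ENNReal.ofReal_le_ofReal hxy⟩

lemma sq_integral_le' {X : Type*} [MeasurableSpace X] (ν : Measure X) [IsProbabilityMeasure ν]
    {g : X → ℝ} (hg : Integrable g ν) (hg2 : Integrable (fun x => g x ^ 2) ν) :
    (∫ x, g x ∂ν) ^ 2 ≤ ∫ x, g x ^ 2 ∂ν := by
  set c := ∫ x, g x ∂ν with hc
  have h0 : 0 ≤ ∫ x, (g x - c) ^ 2 ∂ν := integral_nonneg fun x => sq_nonneg _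
  have hexp : ∀ x, (g x - c) ^ 2 = g x ^ 2 - (2 * c) * g x + c ^ 2 := by intro x; ring
  have hint : ∫ x, (g x - c) ^ 2 ∂ν = (∫ x, g x ^ 2 ∂ν) - c ^ 2 := by
    simp_rw [hexp]
    have i1 : Integrable (fun x => g x ^ 2 - 2 * c * g x) ν := hg2.sub (hg.const_mul (2 * c))
    rw [integral_add i1 (integrable_const _),
      integral_sub hg2 (hg.const_mul (2 * c)), integral_const_mul, integral_const]
    simp [← hc]
    ring
  linarith [hint ▸ h0]

lemma sqrt_integral_sq_le' {X : Type*} [MeasurableSpace X] (ν : Measure X)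
    [IsProbabilityMeasure ν] {f g : X → ℝ} {M : ℝ} (hM : 0 ≤ M)
    (hf0 : ∀ x, 0 ≤ f x) (hg0 : ∀ x, 0 ≤ g x) (hfg : ∀ x, f x ≤ g x + M)
    (hf2 : Integrable (fun x => f x ^ 2) ν) (hg : Integrable g ν)
    (hg2 : Integrable (fun x => g x ^ 2) ν) :
    Real.sqrt (∫ x, f x ^ 2 ∂ν) ≤ Real.sqrt (∫ x, g x ^ 2 ∂ν) + M := by
  have hIg : 0 ≤ ∫ x, g x ∂ν := integral_nonneg hg0
  have hIg2 : 0 ≤ ∫ x, g x ^ 2 ∂ν := integral_nonneg fun x => sq_nonneg _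
  have hcs : ∫ x, g x ∂ν ≤ Real.sqrt (∫ x, g x ^ 2 ∂ν) :=
    (Real.le_sqrt hIg hIg2).2 (sq_integral_le' ν hg hg2)
  have h1 : ∫ x, f x ^ 2 ∂ν ≤ ∫ x, (g x + M) ^ 2 ∂ν := by
    refine integral_mono hf2 ?_ fun x => ?_
    · have : (fun x => (g x + M) ^ 2) = fun x => g x ^ 2 + (2 * M) * g x + M ^ 2 := by
        funext x; ring
      rw [this]
      have i1 : Integrable (fun x => g x ^ 2 + 2 * M * g x) ν := hg2.add (hg.const_mul (2 * M))
      exact i1.add (integrable_const _)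
    · exact pow_le_pow_left₀ (hf0 x) (hfg x) 2
  have h2 : ∫ x, (g x + M) ^ 2 ∂ν = (∫ x, g x ^ 2 ∂ν) + 2 * M * (∫ x, g x ∂ν) + M ^ 2 := by
    have : (fun x => (g x + M) ^ 2) = fun x => g x ^ 2 + (2 * M) * g x + M ^ 2 := by
      funext x; ring
    have i1 : Integrable (fun x => g x ^ 2 + 2 * M * g x) ν := hg2.add (hg.const_mul (2 * M))
    rw [this, integral_add i1 (integrable_const _),
      integral_add hg2 (hg.const_mul (2 * M)), integral_const_mul, integral_const]
    simp
  have h3 : ∫ x, f x ^ 2 ∂ν ≤ (Real.sqrt (∫ x, g x ^ 2 ∂ν) + M) ^ 2 := by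
    have hs : Real.sqrt (∫ x, g x ^ 2 ∂ν) ^ 2 = ∫ x, g x ^ 2 ∂ν := Real.sq_sqrt hIg2
    nlinarith [Real.sqrt_nonneg (∫ x, g x ^ 2 ∂ν)]
  calc Real.sqrt (∫ x, f x ^ 2 ∂ν) ≤ Real.sqrt ((Real.sqrt (∫ x, g x ^ 2 ∂ν) + M) ^ 2) :=
        Real.sqrt_le_sqrt h3
    _ = Real.sqrt (∫ x, g x ^ 2 ∂ν) + M := Real.sqrt_sq (by positivity)

omit [NormedSpace ℝ E] in
lemma sqrt_sum_sq_le' {k : ℕ} (u v : Fin k → E) {M : ℝ} (hM0 : 0 ≤ M)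
    (hM : ∀ ℓ, ‖u ℓ - v ℓ‖ ≤ M) :
    Real.sqrt (∑ ℓ, ‖u ℓ‖ ^ 2) ≤ Real.sqrt (∑ ℓ, ‖v ℓ‖ ^ 2) + M * Real.sqrt k := by
  let U : PiLp 2 (fun _ : Fin k => E) := WithLp.toLp 2 u
  let V : PiLp 2 (fun _ : Fin k => E) := WithLp.toLp 2 v
  have hU : ‖U‖ = Real.sqrt (∑ ℓ, ‖u ℓ‖ ^ 2) := PiLp.norm_eq_of_L2 U
  have hV : ‖V‖ = Real.sqrt (∑ ℓ, ‖v ℓ‖ ^ 2) := PiLp.norm_eq_of_L2 V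
  have hUV : ‖U - V‖ ≤ M * Real.sqrt k := by
    have : ‖U - V‖ = Real.sqrt (∑ ℓ, ‖u ℓ - v ℓ‖ ^ 2) := by
        rw [PiLp.norm_eq_of_L2]; rfl
    rw [this]
    have hsum : (∑ ℓ, ‖u ℓ - v ℓ‖ ^ 2) ≤ ∑ _ℓ : Fin k, M ^ 2 := by
      refine Finset.sum_le_sum fun ℓ _ => ?_
      exact pow_le_pow_left₀ (norm_nonneg _) (hM ℓ) 2
    calc Real.sqrt (∑ ℓ, ‖u ℓ - v ℓ‖ ^ 2) ≤ Real.sqrt (∑ _ℓ : Fin k, M ^ 2) :=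
          Real.sqrt_le_sqrt hsum
      _ = M * Real.sqrt k := by
          rw [Finset.sum_const, Finset.card_univ, Fintype.card_fin, nsmul_eq_mul,
            Real.sqrt_mul (by positivity), Real.sqrt_sq hM0]
          ring
  calc Real.sqrt (∑ ℓ, ‖u ℓ‖ ^ 2) = ‖U‖ := hU.symm
    _ ≤ ‖V‖ + ‖U - V‖ := norm_le_insert' _ _
    _ ≤ Real.sqrt (∑ ℓ, ‖v ℓ‖ ^ 2) + M * Real.sqrt k := add_le_add (le_of_eq hV) hUV

lemma sqrt_sq_add_sq_le' {a b a' b' c e : ℝ} (ha : 0 ≤ a) (hb : 0 ≤ b) (ha' : 0 ≤ a')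
    (hb' : 0 ≤ b') (hc : 0 ≤ c) (he : 0 ≤ e) (h1 : a ≤ a' + c) (h2 : b ≤ b' + e) :
    Real.sqrt (a ^ 2 + b ^ 2) ≤ Real.sqrt (a' ^ 2 + b' ^ 2) + Real.sqrt (c ^ 2 + e ^ 2) := by
  set s := Real.sqrt (a' ^ 2 + b' ^ 2) with hs
  set t := Real.sqrt (c ^ 2 + e ^ 2) with ht
  have hs0 : 0 ≤ s := Real.sqrt_nonneg _
  have ht0 : 0 ≤ t := Real.sqrt_nonneg _
  have hs2 : s ^ 2 = a' ^ 2 + b' ^ 2 := Real.sq_sqrt (by positivity)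
  have ht2 : t ^ 2 = c ^ 2 + e ^ 2 := Real.sq_sqrt (by positivity)
  have hst : a' * c + b' * e ≤ s * t := by
    nlinarith [sq_nonneg (a' * e - b' * c), sq_nonneg (s * t - a' * c - b' * e), mul_nonneg hs0 ht0,
      mul_nonneg (mul_nonneg ha' hc) (mul_nonneg hb' he)]
  have hbound : a ^ 2 + b ^ 2 ≤ (s + t) ^ 2 := by nlinarith
  calc Real.sqrt (a ^ 2 + b ^ 2) ≤ Real.sqrt ((s + t) ^ 2) := Real.sqrt_le_sqrt hbound
    _ = s + t := Real.sqrt_sq (by positivity)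

end aux

open MeasureTheory

noncomputable def d2inf {d k : ℕ} (A B : Fin k → EuclideanSpace ℝ (Fin d)) : ℝ :=
  ⨅ σ : Equiv.Perm (Fin k), ⨆ ℓ : Fin k, dist (A (σ ℓ)) (B ℓ)

/-- The variance-regularized archetypal objective `F_{ν,α}`. -/
noncomputable def regObj {d k : ℕ} (ν : Measure (EuclideanSpace ℝ (Fin d))) (α : ℝ)
    (A : Fin k → EuclideanSpace ℝ (Fin d)) : ℝ :=
  Real.sqrt ((∫ x, Metric.infDist x (convexHull ℝ (Set.range A)) ^ 2 ∂ν) +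
    α / k * ∑ ℓ, ‖A ℓ - (k : ℝ)⁻¹ • ∑ j, A j‖ ^ 2)

section key

variable {d k : ℕ}

local notation "E" => EuclideanSpace ℝ (Fin d)

lemma integrable_infDist_aux (hk : 0 < k) (ν : Measure E) [IsProbabilityMeasure ν]
    (hν : Integrable (fun x => ‖x‖ ^ 2) ν) (C : Fin k → E) :
    Integrable (fun x => Metric.infDist x (convexHull ℝ (Set.range C))) ν ∧
      Integrable (fun x => Metric.infDist x (convexHull ℝ (Set.range C)) ^ 2) ν := by
  set S := convexHull ℝ (Set.range C) with hS
  set c0 : E := C ⟨0, hk⟩ with hc0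
  have hmem : c0 ∈ S := subset_convexHull ℝ _ (Set.mem_range_self _)
  have hcont : Continuous fun x : E => Metric.infDist x S := Metric.continuous_infDist_pt S
  have hbound : ∀ x : E, Metric.infDist x S ≤ ‖x‖ + ‖c0‖ := fun x =>
    le_trans (Metric.infDist_le_dist_of_mem hmem)
      (by rw [dist_eq_norm]; exact norm_sub_le _ _)
  have hnn : ∀ x : E, 0 ≤ Metric.infDist x S := fun x => Metric.infDist_nonneg
  have hnorm : Integrable (fun x : E => ‖x‖) ν := by
    refine Integrable.mono' ((integrable_const (1 : ℝ)).add hν) ?_ ?_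
    · exact continuous_norm.aestronglyMeasurable
    · filter_upwards with x
      rw [Real.norm_eq_abs, abs_of_nonneg (norm_nonneg x)]
      show ‖x‖ ≤ 1 + ‖x‖ ^ 2
      nlinarith [norm_nonneg x, sq_nonneg (‖x‖ - 1)]
  constructor
  · refine Integrable.mono' (hnorm.add (integrable_const ‖c0‖)) hcont.aestronglyMeasurable ?_
    filter_upwards with x
    rw [Real.norm_eq_abs, abs_of_nonneg (hnn x)]
    show Metric.infDist x S ≤ ‖x‖ + ‖c0‖
    exact hbound x
  · have hintb : Integrable (fun x : E => ‖x‖ ^ 2 + 2 * ‖c0‖ * ‖x‖ + ‖c0‖ ^ 2) ν :=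
      (hν.add (hnorm.const_mul (2 * ‖c0‖))).add (integrable_const _)
    refine Integrable.mono' hintb ((hcont.pow 2).aestronglyMeasurable) ?_
    filter_upwards with x
    rw [Real.norm_eq_abs, abs_of_nonneg (sq_nonneg _)]
    have h1 : Metric.infDist x S ^ 2 ≤ (‖x‖ + ‖c0‖) ^ 2 :=
      pow_le_pow_left₀ (hnn x) (hbound x) 2
    nlinarith [h1]

lemma regObj_le_aux (hk : 0 < k) (ν : Measure E) [IsProbabilityMeasure ν]
    (hν : Integrable (fun x => ‖x‖ ^ 2) ν) (α : ℝ) (hα : 0 < α)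
    (C D : Fin k → E) (M : ℝ) (hM0 : 0 ≤ M) (hM : ∀ ℓ, dist (C ℓ) (D ℓ) ≤ M) :
    regObj ν α C ≤ regObj ν α D + (1 + 2 * Real.sqrt α) * M := by
  have hk' : (k : ℝ) ≠ 0 := Nat.cast_ne_zero.2 hk.ne'
  set SC := convexHull ℝ (Set.range C) with hSC
  set SD := convexHull ℝ (Set.range D) with hSD
  set f := fun x : E => Metric.infDist x SC with hf
  set g := fun x : E => Metric.infDist x SD with hg
  -- pointwise bound
  have hpt : ∀ x, f x ≤ g x + M := by
    intro x
    have h1 := Metric.infDist_le_infDist_add_hausdorffDist (x := x)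
      (hausdorffEdist_hull_ne_top' D C M (fun ℓ => by rw [dist_comm]; exact hM ℓ))
    have h2 := hausdorffDist_hull_le' D C M hM0 (fun ℓ => by rw [dist_comm]; exact hM ℓ)
    calc f x ≤ g x + Metric.hausdorffDist SD SC := h1
      _ ≤ g x + M := by linarith
  obtain ⟨hfi, hf2i⟩ := integrable_infDist_aux hk ν hν C
  obtain ⟨hgi, hg2i⟩ := integrable_infDist_aux hk ν hν D
  -- the L² part
  have hsqrt1 : Real.sqrt (∫ x, f x ^ 2 ∂ν) ≤ Real.sqrt (∫ x, g x ^ 2 ∂ν) + M :=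
    sqrt_integral_sq_le' ν hM0 (fun x => Metric.infDist_nonneg) (fun x => Metric.infDist_nonneg)
      hpt hf2i hgi hg2i
  -- the variance part
  set cb : E := (k : ℝ)⁻¹ • ∑ j, C j with hcb
  set db : E := (k : ℝ)⁻¹ • ∑ j, D j with hdb
  set u := fun ℓ => C ℓ - cb with hu
  set v := fun ℓ => D ℓ - db with hv
  have hbar : ‖cb - db‖ ≤ M := by
    have h1 : cb - db = (k : ℝ)⁻¹ • ∑ j, (C j - D j) := by
      rw [hcb, hdb, ← smul_sub, Finset.sum_sub_distrib]
    rw [h1, norm_smul]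
    have h2 : ‖∑ j, (C j - D j)‖ ≤ ∑ _j : Fin k, M := by
      refine le_trans (norm_sum_le _ _) (Finset.sum_le_sum fun j _ => ?_)
      rw [← dist_eq_norm]; exact hM j
    rw [Finset.sum_const, Finset.card_univ, Fintype.card_fin, nsmul_eq_mul] at h2
    have h3 : ‖(k : ℝ)⁻¹‖ = (k : ℝ)⁻¹ := by
      rw [Real.norm_eq_abs, abs_of_nonneg (by positivity)]
    rw [h3]
    calc (k : ℝ)⁻¹ * ‖∑ j, (C j - D j)‖ ≤ (k : ℝ)⁻¹ * ((k : ℝ) * M) := by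
          refine mul_le_mul_of_nonneg_left h2 (by positivity)
      _ = M := by field_simp
  have huv : ∀ ℓ, ‖u ℓ - v ℓ‖ ≤ 2 * M := by
    intro ℓ
    have : u ℓ - v ℓ = (C ℓ - D ℓ) + (db - cb) := by simp only [hu, hv]; abel
    rw [this]
    calc ‖(C ℓ - D ℓ) + (db - cb)‖ ≤ ‖C ℓ - D ℓ‖ + ‖db - cb‖ := norm_add_le _ _
      _ ≤ M + M := add_le_add (by rw [← dist_eq_norm]; exact hM ℓ)
          (by rw [norm_sub_rev]; exact hbar)
      _ = 2 * M := by ring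
  have hvar : Real.sqrt (∑ ℓ, ‖u ℓ‖ ^ 2) ≤ Real.sqrt (∑ ℓ, ‖v ℓ‖ ^ 2) + 2 * M * Real.sqrt k :=
    sqrt_sum_sq_le' u v (by positivity) huv
  -- assemble
  set PA := ∫ x, f x ^ 2 ∂ν with hPA
  set PB := ∫ x, g x ^ 2 ∂ν with hPB
  set QA := α / k * ∑ ℓ, ‖u ℓ‖ ^ 2 with hQA
  set QB := α / k * ∑ ℓ, ‖v ℓ‖ ^ 2 with hQB
  have hPA0 : 0 ≤ PA := integral_nonneg fun x => sq_nonneg _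
  have hPB0 : 0 ≤ PB := integral_nonneg fun x => sq_nonneg _
  have hαk : 0 ≤ α / k := by positivity
  have hQA0 : 0 ≤ QA := mul_nonneg hαk (Finset.sum_nonneg fun ℓ _ => sq_nonneg _)
  have hQB0 : 0 ≤ QB := mul_nonneg hαk (Finset.sum_nonneg fun ℓ _ => sq_nonneg _)
  -- √QA ≤ √QB + 2√α M
  have hQ : Real.sqrt QA ≤ Real.sqrt QB + 2 * Real.sqrt α * M := by
    rw [hQA, hQB, Real.sqrt_mul hαk, Real.sqrt_mul hαk]
    have hkey : Real.sqrt (α / k) * Real.sqrt k = Real.sqrt α := by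
      rw [← Real.sqrt_mul hαk, div_mul_cancel₀ _ hk']
    calc Real.sqrt (α / k) * Real.sqrt (∑ ℓ, ‖u ℓ‖ ^ 2)
        ≤ Real.sqrt (α / k) * (Real.sqrt (∑ ℓ, ‖v ℓ‖ ^ 2) + 2 * M * Real.sqrt k) :=
          mul_le_mul_of_nonneg_left hvar (Real.sqrt_nonneg _)
      _ = Real.sqrt (α / k) * Real.sqrt (∑ ℓ, ‖v ℓ‖ ^ 2)
          + 2 * M * (Real.sqrt (α / k) * Real.sqrt k) := by ring
      _ = Real.sqrt (α / k) * Real.sqrt (∑ ℓ, ‖v ℓ‖ ^ 2) + 2 * Real.sqrt α * M := by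
          rw [hkey]; ring
  -- combine via ℝ²
  have hcomb : Real.sqrt (PA + QA) ≤ Real.sqrt (PB + QB)
      + Real.sqrt (M ^ 2 + (2 * Real.sqrt α * M) ^ 2) := by
    have e1 : PA = Real.sqrt PA ^ 2 := (Real.sq_sqrt hPA0).symm
    have e2 : QA = Real.sqrt QA ^ 2 := (Real.sq_sqrt hQA0).symm
    have e3 : PB = Real.sqrt PB ^ 2 := (Real.sq_sqrt hPB0).symm
    have e4 : QB = Real.sqrt QB ^ 2 := (Real.sq_sqrt hQB0).symm
    rw [e1, e2, e3, e4]
    exact sqrt_sq_add_sq_le' (Real.sqrt_nonneg _) (Real.sqrt_nonneg _) (Real.sqrt_nonneg _)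
      (Real.sqrt_nonneg _) hM0 (by positivity) hsqrt1 hQ
  have hlast : Real.sqrt (M ^ 2 + (2 * Real.sqrt α * M) ^ 2) ≤ (1 + 2 * Real.sqrt α) * M := by
    have hsa : Real.sqrt α ^ 2 = α := Real.sq_sqrt hα.le
    have hb : M ^ 2 + (2 * Real.sqrt α * M) ^ 2 ≤ ((1 + 2 * Real.sqrt α) * M) ^ 2 := by
      nlinarith [Real.sqrt_nonneg α, sq_nonneg M, mul_nonneg (Real.sqrt_nonneg α) (sq_nonneg M)]
    calc Real.sqrt (M ^ 2 + (2 * Real.sqrt α * M) ^ 2)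
        ≤ Real.sqrt (((1 + 2 * Real.sqrt α) * M) ^ 2) := Real.sqrt_le_sqrt hb
      _ = (1 + 2 * Real.sqrt α) * M := Real.sqrt_sq (by positivity)
  have : regObj ν α C = Real.sqrt (PA + QA) := rfl
  rw [this]
  have : regObj ν α D = Real.sqrt (PB + QB) := rfl
  rw [this]
  linarith [hcomb, hlast]

end key

theorem regObj_lipschitz {d k : ℕ} (hk : 0 < k) (ν : Measure (EuclideanSpace ℝ (Fin d)))
    [IsProbabilityMeasure ν] (hν : Integrable (fun x => ‖x‖ ^ 2) ν)
    (α : ℝ) (hα : 0 < α) (A B : Fin k → EuclideanSpace ℝ (Fin d)) :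
    |regObj ν α A - regObj ν α B| ≤ (1 + 2 * Real.sqrt α) * d2inf A B := by
  -- choose a minimizing permutation
  obtain ⟨σ, hσ⟩ := Finite.exists_min fun σ : Equiv.Perm (Fin k) =>
    ⨆ ℓ : Fin k, dist (A (σ ℓ)) (B ℓ)
  set M := ⨆ ℓ : Fin k, dist (A (σ ℓ)) (B ℓ) with hMdef
  have hd2 : d2inf A B = M := le_antisymm (ciInf_le (Finite.bddBelow_range _) σ) (le_ciInf hσ)
  have hMle : ∀ ℓ, dist (A (σ ℓ)) (B ℓ) ≤ M := fun ℓ =>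
    le_ciSup (f := fun ℓ => dist (A (σ ℓ)) (B ℓ)) (Set.Finite.bddAbove (Set.finite_range _)) ℓ
  have hM0 : 0 ≤ M := le_trans dist_nonneg (hMle ⟨0, hk⟩)
  -- regObj is invariant under permutation of the points
  have hperm : regObj ν α (fun ℓ => A (σ ℓ)) = regObj ν α A := by
    unfold regObj
    congr 2
    · congr 1
      have : (fun ℓ => A (σ ℓ)) = A ∘ σ := rfl
      rw [this, σ.surjective.range_comp]
    · have hsum : (∑ j, A (σ j)) = ∑ j, A j := Equiv.sum_comp σ A
      rw [hsum]
      congr 1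
      simpa using Equiv.sum_comp σ (fun ℓ => ‖A ℓ - (k : ℝ)⁻¹ • ∑ j, A j‖ ^ 2)
  have h1 : regObj ν α A ≤ regObj ν α B + (1 + 2 * Real.sqrt α) * M := by
    rw [← hperm]
    exact regObj_le_aux hk ν hν α hα _ B M hM0 hMle
  have h2 : regObj ν α B ≤ regObj ν α A + (1 + 2 * Real.sqrt α) * M := by
    rw [← hperm]
    exact regObj_le_aux hk ν hν α hα B _ M hM0 (fun ℓ => by rw [dist_comm]; exact hMle ℓ)
  rw [hd2, abs_sub_le_iff]
  constructor <;> linarith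
end
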